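/- For every even natural number n, |Δ^{odd}_{3,2}(n) − (Δ^{odd}₃([0, n)) − Δ₃([0, n/2)))| ≤ 1, where Δ^{odd}₃([0, n)) is the excess of evil over odious integers among the odd multiples of 3 in [0, n) and Δ₃([0, n/2)) is the excess of evil over odious integers among the multiples of 3 in [0, n/2). -/

import Mathlib

/-- `s2 m` is the number of 1's in the binary expansion of `m` (binary digit sum). -/
def s2 (m : ℕ) : ℕ := (Nat.digits 2 m).sum

/-- A natural number is *odious* if the number of 1's in its binary expansion is odd. -/
def Odious (m : ℕ) : Prop := Odd (s2 m)

/-- A natural number is *evil* if the number of 1's in its binary expansion is even. -/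
def Evil (m : ℕ) : Prop := Even (s2 m)

instance : DecidablePred Odious := fun m => inferInstanceAs (Decidable (Odd (s2 m)))
instance : DecidablePred Evil := fun m => inferInstanceAs (Decidable (Even (s2 m)))

/-- `muOdious n` = μ⁰(n): the number of odd odious integers in `[0, n)`. -/
def muOdious (n : ℕ) : ℕ := ((Finset.range n).filter (fun m => Odd m ∧ Odious m)).card

/-- `muEvil n` = μᵉ(n): the number of odd evil integers in `[0, n)`. -/
def muEvil (n : ℕ) : ℕ := ((Finset.range n).filter (fun m => Odd m ∧ Evil m)).card

/-- `deltaOdd3 i n` = Δ^{odd}_{3,i}(n): the number of odd odious integers `m ∈ [0, n)` with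
`m ≡ i (mod 3)` minus the number of odd evil integers `m ∈ [0, n)` with `m ≡ i (mod 3)`. -/
def deltaOdd3 (i n : ℕ) : ℤ :=
  (((Finset.range n).filter (fun m => Odd m ∧ m % 3 = i ∧ Odious m)).card : ℤ) -
  (((Finset.range n).filter (fun m => Odd m ∧ m % 3 = i ∧ Evil m)).card : ℤ)

/-- `delta3 N` = Δ₃([0, N)): the number of evil multiples of 3 in `[0, N)` minus the number of
odious multiples of 3 in `[0, N)`. -/
def delta3 (N : ℕ) : ℤ :=
  (((Finset.range N).filter (fun m => 3 ∣ m ∧ Evil m)).card : ℤ) -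
  (((Finset.range N).filter (fun m => 3 ∣ m ∧ Odious m)).card : ℤ)

/-- `deltaOdd3All n` = Δ^{odd}₃([0, n)): the number of odd evil multiples of 3 in `[0, n)`
minus the number of odd odious multiples of 3 in `[0, n)`. -/
def deltaOdd3All (n : ℕ) : ℤ :=
  (((Finset.range n).filter (fun m => Odd m ∧ 3 ∣ m ∧ Evil m)).card : ℤ) -
  (((Finset.range n).filter (fun m => Odd m ∧ 3 ∣ m ∧ Odious m)).card : ℤ)

/-!
With the signed Thue–Morse sequence `ε m = (-1) ^ s₂(m)`, each of `Δ^{odd}_{3,2}`, `Δ^{odd}₃` and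
`Δ₃` is a sum of `ε` over a residue class mod 3. For `n = 2M` the odd `m < n` are the `2k + 1`
with `k < M`; here `ε (2k + 1) = -ε k`, and `2k + 1 ≡ 2` resp. `0 (mod 3)` iff `k ≡ 2` resp. `1`.
So the three quantities are `±` the sums of `ε k` over `k < M` in the classes `2`, `1` and `0`,
and the combination in the theorem is the partial sum `∑_{k < M} ε k`, which lies in `{-1, 0, 1}`
because `ε (2k) + ε (2k + 1) = 0`.
-/

open Finset

lemma s2_two_mul (k : ℕ) : s2 (2 * k) = s2 k := by
  rcases Nat.eq_zero_or_pos k with rfl | hk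
  · rfl
  · simp [s2, Nat.digits_base_mul one_lt_two hk]

lemma s2_two_mul_add_one (k : ℕ) : s2 (2 * k + 1) = s2 k + 1 := by
  rw [s2, add_comm, Nat.digits_add 2 one_lt_two 1 k one_lt_two (Or.inl one_ne_zero),
    List.sum_cons, add_comm, s2]

def thueMorseSign (m : ℕ) : ℤ := (-1) ^ s2 m

lemma thueMorseSign_two_mul (k : ℕ) : thueMorseSign (2 * k) = thueMorseSign k := by
  rw [thueMorseSign, s2_two_mul, thueMorseSign]

lemma thueMorseSign_two_mul_add_one (k : ℕ) :
    thueMorseSign (2 * k + 1) = -thueMorseSign k := by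
  rw [thueMorseSign, s2_two_mul_add_one, pow_succ, mul_neg_one, thueMorseSign]

lemma sum_range_two_mul_thueMorseSign (M : ℕ) : ∑ k ∈ range (2 * M), thueMorseSign k = 0 := by
  induction M with
  | zero => rfl
  | succ M ih =>
    rw [mul_add_one, sum_range_succ, sum_range_succ, ih, thueMorseSign_two_mul_add_one,
      thueMorseSign_two_mul]
    ring

lemma abs_sum_range_thueMorseSign_le_one (N : ℕ) : |∑ k ∈ range N, thueMorseSign k| ≤ 1 := by
  obtain ⟨M, rfl | rfl⟩ := Nat.even_or_odd' N
  · simp [sum_range_two_mul_thueMorseSign]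
  · rw [sum_range_succ, sum_range_two_mul_thueMorseSign, zero_add, thueMorseSign, abs_pow,
      abs_neg, abs_one, one_pow]

lemma sum_filter_thueMorseSign (s : Finset ℕ) (p : ℕ → Prop) [DecidablePred p] :
    ∑ m ∈ s.filter p, thueMorseSign m =
      ((s.filter fun m => p m ∧ Evil m).card : ℤ) - (s.filter fun m => p m ∧ Odious m).card := by
  have hOdious : s.filter (fun m => p m ∧ ¬Evil m) = s.filter (fun m => p m ∧ Odious m) :=
    filter_congr fun m _ => by rw [Evil, Odious, Nat.not_even_iff_odd]
  rw [← sum_filter_add_sum_filter_not _ Evil, filter_filter, filter_filter, hOdious,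
    sum_eq_card_nsmul fun m hm => (mem_filter.1 hm).2.2.neg_one_pow,
    sum_eq_card_nsmul fun m hm => (mem_filter.1 hm).2.2.neg_one_pow]
  simp [sub_eq_add_neg]

lemma sum_filter_odd_range_two_mul {M : Type*} [AddCommMonoid M] (f : ℕ → M) (p : ℕ → Prop)
    [DecidablePred p] (N : ℕ) :
    ∑ m ∈ (range (2 * N)).filter (fun m => Odd m ∧ p m), f m =
      ∑ k ∈ (range N).filter (fun k => p (2 * k + 1)), f (2 * k + 1) := by
  symm
  refine sum_nbij' (fun k => 2 * k + 1) (· / 2) ?_ ?_ ?_ ?_ (fun _ _ => rfl)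
  · intro k hk
    simp only [mem_filter, mem_range] at hk ⊢
    exact ⟨by omega, odd_two_mul_add_one k, hk.2⟩
  · intro m hm
    simp only [mem_filter, mem_range] at hm ⊢
    exact ⟨by omega, by rw [Nat.two_mul_div_two_add_one_of_odd hm.2.1]; exact hm.2.2⟩
  · intro k _
    omega
  · intro m hm
    have := Nat.odd_iff.1 (mem_filter.1 hm).2.1
    omega

lemma deltaOdd3_eq_neg_sum (i n : ℕ) :
    deltaOdd3 i n = -∑ m ∈ (range n).filter (fun m => Odd m ∧ m % 3 = i), thueMorseSign m := by
  rw [sum_filter_thueMorseSign]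
  simp only [deltaOdd3, and_assoc, neg_sub]

lemma deltaOdd3All_eq_sum (n : ℕ) :
    deltaOdd3All n = ∑ m ∈ (range n).filter (fun m => Odd m ∧ 3 ∣ m), thueMorseSign m := by
  rw [sum_filter_thueMorseSign]
  simp only [deltaOdd3All, and_assoc]

lemma delta3_eq_sum (N : ℕ) : delta3 N = ∑ m ∈ (range N).filter (· % 3 = 0), thueMorseSign m := by
  rw [sum_filter_thueMorseSign, delta3]
  simp only [Nat.dvd_iff_mod_eq_zero]

lemma sum_range_eq_sum_filter_mod_three {M : Type*} [AddCommMonoid M] (f : ℕ → M) (N : ℕ) :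
    ∑ k ∈ range N, f k = ∑ k ∈ (range N).filter (· % 3 = 0), f k +
      ∑ k ∈ (range N).filter (· % 3 = 1), f k + ∑ k ∈ (range N).filter (· % 3 = 2), f k := by
  rw [← sum_fiberwise_of_maps_to (t := range 3) (g := (· % 3))
    fun k _ => mem_range.2 (Nat.mod_lt k three_pos)]
  simp only [sum_range_succ, sum_range_zero, zero_add]

lemma deltaOdd3_two_two_mul (M : ℕ) :
    deltaOdd3 2 (2 * M) = ∑ k ∈ (range M).filter (· % 3 = 2), thueMorseSign k := by
  rw [deltaOdd3_eq_neg_sum, sum_filter_odd_range_two_mul _ (· % 3 = 2), ← sum_neg_distrib]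
  exact sum_congr (filter_congr fun k _ => by omega)
    fun k _ => by rw [thueMorseSign_two_mul_add_one, neg_neg]

lemma deltaOdd3All_two_mul (M : ℕ) :
    deltaOdd3All (2 * M) = -∑ k ∈ (range M).filter (· % 3 = 1), thueMorseSign k := by
  rw [deltaOdd3All_eq_sum, sum_filter_odd_range_two_mul _ (3 ∣ ·), ← sum_neg_distrib]
  exact sum_congr (filter_congr fun k _ => by omega)
    fun k _ => thueMorseSign_two_mul_add_one k

/-- For every even natural number `n`,
|Δ^{odd}_{3,2}(n) − (Δ^{odd}₃([0, n)) − Δ₃([0, n/2)))| ≤ 1. -/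
theorem abs_deltaOdd3_two_sub_le_one (n : ℕ) (hn : Even n) :
    |deltaOdd3 2 n - (deltaOdd3All n - delta3 (n / 2))| ≤ 1 := by
  obtain ⟨M, rfl⟩ := hn
  rw [← two_mul, Nat.mul_div_cancel_left M two_pos, deltaOdd3_two_two_mul, deltaOdd3All_two_mul,
    delta3_eq_sum]
  convert abs_sum_range_thueMorseSign_le_one M using 2
  rw [sum_range_eq_sum_filter_mod_three]
  ring
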